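/- For every ε > 0 there exists a finite set P of at least 2 points in ℝ² such that, with distances given by the L∞ norm (‖(x,y)‖_∞ = max(|x|, |y|)), every Hamiltonian path on P has length at least (2 − ε) · w(T_min), where T_min is a minimum spanning tree of P under the L∞ distance. -/

import Mathlib

/-!
Take `K` levels: level `m` consists of `R ^ (K - 1 - m) + 1` points spaced `2 R ^ m` apart on the
line `y = (-1) ^ m R ^ m`, so all levels span the same interval `[0, 2 R ^ (K - 1)]`. Charge each
point `(1 - 1/R)` times its height `|y|`. Any two distinct points are at distance at least the sum
of their charges: on one level they are `2 R ^ m` apart horizontally; on levels of opposite sign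
the vertical gap is the sum of the heights; on levels of the same sign the heights differ by a
factor at least `R ^ 2`, so the vertical gap is almost their sum. Hence every Hamiltonian path has
length at least twice the total charge minus the two end charges, about `2 K R ^ (K - 1)`.
Conversely, dropping every point vertically to the bottom level `y = 1` and chaining the bottom
level from left to right gives a spanning tree of weight at most `(K + 6) R ^ (K - 1)`. Let
`R = K → ∞`.
-/

open scoped Classical

/-- The weight of the graph `G` with respect to the (symmetric) weight function `w`. -/
noncomputable def weightOf {V : Type*} [Fintype V] (G : SimpleGraph V) (w : V → V → ℝ) : ℝ :=
  (∑ u : V, ∑ v : V, if G.Adj u v then w u v else 0) / 2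

/-- The L∞ distance between two points of `ℝ²`. -/
noncomputable def ptDist (p q : ℝ × ℝ) : ℝ := max |p.1 - q.1| |p.2 - q.2|

/-- The length of the path visiting the points of the list `l` in order. -/
noncomputable def pathLength (l : List (ℝ × ℝ)) : ℝ :=
  ((l.zip l.tail).map (fun pq => ptDist pq.1 pq.2)).sum

open Finset SimpleGraph

section Graph

variable {V : Type*}

lemma weightOf_nonneg [Fintype V] (G : SimpleGraph V) {w : V → V → ℝ} (hw : ∀ u v, 0 ≤ w u v) :
    0 ≤ weightOf G w :=
  div_nonneg (sum_nonneg fun u _ => sum_nonneg fun v _ => by split_ifs <;> simp [hw]) two_pos.le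

lemma weightOf_mono [Fintype V] {G H : SimpleGraph V} (hGH : G ≤ H) {w : V → V → ℝ}
    (hw : ∀ u v, 0 ≤ w u v) : weightOf G w ≤ weightOf H w := by
  unfold weightOf
  gcongr with u _ v _
  by_cases hG : G.Adj u v
  · simp [hG, hGH hG]
  · by_cases hH : H.Adj u v <;> simp [hG, hH, hw]

lemma weightOf_fromRel_le [Fintype V] (f : V → V) {w : V → V → ℝ} (hw : ∀ u v, 0 ≤ w u v)
    (hsymm : ∀ u v, w u v = w v u) :
    weightOf (fromRel fun u v => v = f u) w ≤ ∑ u, w u (f u) := by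
  have hfirst : ∑ u, ∑ v, (if v = f u then w u v else 0) = ∑ u, w u (f u) := by
    simp only [sum_ite_eq', mem_univ, if_true]
  have hsecond : ∑ u, ∑ v, (if u = f v then w u v else 0) = ∑ u, w u (f u) := by
    rw [sum_comm]
    simp only [sum_ite_eq', mem_univ, if_true, hsymm]
  unfold weightOf
  rw [div_le_iff₀ two_pos]
  calc _ ≤ ∑ u, ∑ v, ((if v = f u then w u v else 0) + (if u = f v then w u v else 0)) := by
        gcongr with u _ v _
        have := hw u v
        rw [fromRel_adj]
        split_ifs <;> grind
    _ = _ := by simp only [sum_add_distrib, hfirst, hsecond]; ring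

lemma reachable_iterate_fromRel (f : V → V) (u : V) (n : ℕ) :
    (fromRel fun u v => v = f u).Reachable u (f^[n] u) := by
  induction n with
  | zero => rfl
  | succ n ih =>
    refine ih.trans ?_
    rw [Function.iterate_succ_apply']
    by_cases h : f^[n] u = f (f^[n] u)
    · rw [← h]
    · exact (fromRel_adj _ _ _ |>.mpr ⟨h, Or.inl rfl⟩).reachable

lemma exists_isTree_weightOf_le [Fintype V] (f : V → V) (r : V) (hr : ∀ u, ∃ n, f^[n] u = r)
    {w : V → V → ℝ} (hw : ∀ u v, 0 ≤ w u v) (hsymm : ∀ u v, w u v = w v u) :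
    ∃ T : SimpleGraph V, T.IsTree ∧ weightOf T w ≤ ∑ u, w u (f u) := by
  have : Nonempty V := ⟨r⟩
  have hconn : (fromRel fun u v => v = f u).Connected := by
    refine Connected.mk fun u v => ?_
    obtain ⟨m, hm⟩ := hr u
    obtain ⟨n, hn⟩ := hr v
    have hu := reachable_iterate_fromRel f u m
    have hv := reachable_iterate_fromRel f v n
    rw [hm] at hu
    rw [hn] at hv
    exact hu.trans hv.symm
  obtain ⟨T, hTle, hT⟩ := hconn.exists_isTree_le
  exact ⟨T, hT, (weightOf_mono hTle hw).trans (weightOf_fromRel_le f hw hsymm)⟩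

end Graph

lemma ptDist_comm (p q : ℝ × ℝ) : ptDist p q = ptDist q p := by
  rw [ptDist, ptDist, abs_sub_comm p.1, abs_sub_comm p.2]

lemma ptDist_nonneg (p q : ℝ × ℝ) : 0 ≤ ptDist p q :=
  (abs_nonneg _).trans (le_max_left _ _)

lemma abs_sub_le_ptDist_fst (p q : ℝ × ℝ) : |p.1 - q.1| ≤ ptDist p q := le_max_left _ _

lemma abs_sub_le_ptDist_snd (p q : ℝ × ℝ) : |p.2 - q.2| ≤ ptDist p q := le_max_right _ _

lemma pathLength_nonneg (l : List (ℝ × ℝ)) : 0 ≤ pathLength l :=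
  List.sum_nonneg fun _ h => by
    obtain ⟨pq, _, rfl⟩ := List.mem_map.mp h
    exact ptDist_nonneg _ _

lemma pathLength_singleton (x : ℝ × ℝ) : pathLength [x] = 0 := rfl

lemma pathLength_cons_cons (x y : ℝ × ℝ) (l : List (ℝ × ℝ)) :
    pathLength (x :: y :: l) = ptDist x y + pathLength (y :: l) := rfl

lemma two_mul_sum_le_pathLength_add (c : ℝ × ℝ → ℝ) (x : ℝ × ℝ) (l : List (ℝ × ℝ))
    (hl : (x :: l).IsChain fun u v => c u + c v ≤ ptDist u v) :
    2 * ((x :: l).map c).sum ≤ pathLength (x :: l) + c x + c ((x :: l).getLast (by simp)) := by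
  induction l generalizing x with
  | nil => simp [pathLength_singleton, two_mul]
  | cons y l ih =>
    rw [List.isChain_cons_cons] at hl
    have := ih y hl.2
    simp only [List.map_cons, List.sum_cons, List.getLast_cons_cons, pathLength_cons_cons] at this ⊢
    linarith [hl.1]

lemma one_sub_inv_le_one (R : ℕ) : 1 - (R : ℝ)⁻¹ ≤ 1 := by
  have : (0 : ℝ) ≤ (R : ℝ)⁻¹ := by positivity
  linarith

lemma one_sub_inv_mul_add_le {R a b : ℝ} (hR : 2 ≤ R) (hb : 0 ≤ b) (hab : R ^ 2 * b ≤ a) :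
    (1 - R⁻¹) * (a + b) ≤ a - b := by
  have : 2 * b ≤ R⁻¹ * (a + b) := by
    rw [le_inv_mul_iff₀ (by linarith)]
    nlinarith [mul_nonneg (sq_nonneg (R - 1)) hb]
  linarith

section Construction

noncomputable def pt (R m j : ℕ) : ℝ × ℝ := (2 * j * R ^ m, (-1) ^ m * R ^ m)

noncomputable def pointSet (R K : ℕ) : Finset (ℝ × ℝ) :=
  ((range K).sigma fun m => range (R ^ (K - 1 - m) + 1)).image fun i => pt R i.1 i.2

noncomputable def parentPt (p : ℝ × ℝ) : ℝ × ℝ :=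
  (if p.2 = 1 then max (p.1 - 2) 0 else p.1, 1)

variable {R K : ℕ}

lemma abs_pt_snd (R m j : ℕ) : |(pt R m j).2| = (R : ℝ) ^ m := by
  simp [pt, abs_mul]

lemma pt_inj (hR : 2 ≤ R) {m j m' j' : ℕ} (h : pt R m j = pt R m' j') : m = m' ∧ j = j' := by
  have hm : m = m' := by
    have := congrArg (fun p => |p.2|) h
    simp only [abs_pt_snd] at this
    exact Nat.pow_right_injective hR (by exact_mod_cast this)
  subst hm
  have hR0 : (R : ℝ) ^ m ≠ 0 := by positivity
  have := congrArg Prod.fst h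
  simp only [pt, mul_left_inj' hR0] at this
  exact ⟨rfl, by exact_mod_cast (mul_right_inj' two_ne_zero).mp this⟩

lemma mem_pointSet {p : ℝ × ℝ} :
    p ∈ pointSet R K ↔ ∃ m < K, ∃ j ≤ R ^ (K - 1 - m), pt R m j = p := by
  simp only [pointSet, mem_image, mem_sigma, mem_range, Nat.lt_succ_iff, Sigma.exists]
  grind

lemma pt_zero_zero_mem (hK : K ≠ 0) : pt R 0 0 ∈ pointSet R K :=
  mem_pointSet.mpr ⟨0, by omega, 0, Nat.zero_le _, rfl⟩

lemma two_le_card_pointSet (hR : 2 ≤ R) (hK : K ≠ 0) : 2 ≤ #(pointSet R K) := by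
  refine one_lt_card.mpr ⟨pt R 0 0, pt_zero_zero_mem hK, pt R 0 1, ?_, ?_⟩
  · exact mem_pointSet.mpr ⟨0, by omega, 1, Nat.one_le_pow _ _ (by omega), rfl⟩
  · simp [pt]

lemma sum_pointSet (hR : 2 ≤ R) (f : ℝ × ℝ → ℝ) :
    ∑ p ∈ pointSet R K, f p =
      ∑ m ∈ range K, ∑ j ∈ range (R ^ (K - 1 - m) + 1), f (pt R m j) := by
  rw [pointSet, sum_image, sum_sigma]
  rintro ⟨m, j⟩ - ⟨m', j'⟩ - h
  obtain ⟨rfl, rfl⟩ := pt_inj hR h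
  rfl

lemma abs_snd_le_of_mem (hR : 1 ≤ R) {p : ℝ × ℝ} (hp : p ∈ pointSet R K) :
    |p.2| ≤ (R : ℝ) ^ (K - 1) := by
  obtain ⟨m, hm, j, -, rfl⟩ := mem_pointSet.mp hp
  rw [abs_pt_snd]
  exact pow_le_pow_right₀ (by exact_mod_cast hR) (by omega)

lemma le_sum_abs_snd (hR : 2 ≤ R) : K * (R : ℝ) ^ (K - 1) ≤ ∑ p ∈ pointSet R K, |p.2| := by
  rw [sum_pointSet hR]
  simp only [abs_pt_snd, sum_const, card_range, nsmul_eq_mul]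
  have := card_nsmul_le_sum (range K) (fun m => ((R ^ (K - 1 - m) + 1 : ℕ) : ℝ) * R ^ m)
    ((R : ℝ) ^ (K - 1)) fun m hm => by
      rw [← pow_sub_mul_pow (R : ℝ) (m := m) (n := K - 1) (by simp at hm; omega)]
      push_cast
      nlinarith [pow_nonneg (Nat.cast_nonneg R : (0 : ℝ) ≤ R) m,
        pow_nonneg (Nat.cast_nonneg R : (0 : ℝ) ≤ R) (K - 1 - m)]
  simpa using this

lemma abs_pt_snd_sub (R m d j j' : ℕ) :
    |(pt R (m + d) j).2 - (pt R m j').2| = |(-1) ^ d * (R : ℝ) ^ (m + d) - R ^ m| := by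
  simp only [pt]
  rw [pow_add (-1 : ℝ), mul_assoc, ← mul_sub, abs_mul, abs_pow, abs_neg, abs_one, one_pow,
    one_mul]

lemma two_mul_pow_le_abs_pt_fst_sub {j j' : ℕ} (hj : j ≠ j') (R m : ℕ) :
    2 * (R : ℝ) ^ m ≤ |(pt R m j).1 - (pt R m j').1| := by
  have h1 : (1 : ℝ) ≤ |(j : ℝ) - j'| := by
    have hz : (j : ℤ) - j' ≠ 0 := sub_ne_zero.mpr (by exact_mod_cast hj)
    exact_mod_cast Int.one_le_abs hz
  rw [pt, pt, ← sub_mul, ← mul_sub, abs_mul, abs_mul, abs_two, abs_pow, Nat.abs_cast]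
  nlinarith [pow_nonneg (Nat.cast_nonneg R : (0 : ℝ) ≤ R) m]

lemma charge_le_ptDist_of_le (hR : 2 ≤ R) {m j m' j' : ℕ} (hm : m' ≤ m)
    (hne : pt R m j ≠ pt R m' j') :
    (1 - (R : ℝ)⁻¹) * (R ^ m + R ^ m') ≤ ptDist (pt R m j) (pt R m' j') := by
  have hR1 : (1 : ℝ) ≤ R := by norm_cast; omega
  obtain ⟨d, rfl⟩ := Nat.exists_eq_add_of_le hm
  have hy := abs_pt_snd_sub R m' d j j'
  have hpos : (0 : ℝ) < R ^ m' := by positivity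
  have hpos' : (0 : ℝ) < R ^ (m' + d) := by positivity
  rcases Nat.even_or_odd d with hd | hd
  · obtain rfl | hd2 : d = 0 ∨ 2 ≤ d := by rcases hd with ⟨e, rfl⟩; omega
    · have hx := two_mul_pow_le_abs_pt_fst_sub (fun (h : j = j') => hne (by subst h; rfl)) R m'
      refine le_trans ?_ (hx.trans (abs_sub_le_ptDist_fst _ _))
      rw [add_zero, ← two_mul]
      exact mul_le_of_le_one_left (by positivity : (0 : ℝ) ≤ 2 * R ^ m') (one_sub_inv_le_one R)
    · have hab : (R : ℝ) ^ 2 * R ^ m' ≤ R ^ (m' + d) := by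
        rw [← pow_add, add_comm 2]
        exact pow_le_pow_right₀ hR1 (by omega)
      have hgap : (R : ℝ) ^ (m' + d) - R ^ m' ≤ |(pt R (m' + d) j).2 - (pt R m' j').2| := by
        rw [hy, hd.neg_one_pow, one_mul]
        exact le_abs_self _
      refine (one_sub_inv_mul_add_le (by exact_mod_cast hR) hpos.le hab).trans ?_
      exact hgap.trans (abs_sub_le_ptDist_snd _ _)
  · have hgap : (R : ℝ) ^ (m' + d) + R ^ m' ≤ |(pt R (m' + d) j).2 - (pt R m' j').2| := by
      rw [hy, hd.neg_one_pow, neg_one_mul, ← neg_add', abs_neg]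
      exact le_abs_self _
    refine le_trans ?_ (hgap.trans (abs_sub_le_ptDist_snd _ _))
    nlinarith [one_sub_inv_le_one R]

lemma charge_le_ptDist (hR : 2 ≤ R) {p q : ℝ × ℝ} (hp : p ∈ pointSet R K)
    (hq : q ∈ pointSet R K) (hpq : p ≠ q) :
    (1 - (R : ℝ)⁻¹) * |p.2| + (1 - (R : ℝ)⁻¹) * |q.2| ≤ ptDist p q := by
  obtain ⟨m, -, j, -, rfl⟩ := mem_pointSet.mp hp
  obtain ⟨m', -, j', -, rfl⟩ := mem_pointSet.mp hq
  rw [abs_pt_snd, abs_pt_snd, ← mul_add]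
  rcases le_total m' m with h | h
  · exact charge_le_ptDist_of_le hR h hpq
  · rw [add_comm, ptDist_comm]
    exact charge_le_ptDist_of_le hR h hpq.symm

lemma le_pathLength_of_toFinset_eq (hR : 2 ≤ R) (hK : K ≠ 0) {l : List (ℝ × ℝ)} (hl : l.Nodup)
    (hlP : l.toFinset = pointSet R K) :
    (1 - (R : ℝ)⁻¹) * (2 * K - 2) * (R : ℝ) ^ (K - 1) ≤ pathLength l := by
  have hmem {p : ℝ × ℝ} (hp : p ∈ l) : p ∈ pointSet R K := hlP ▸ List.mem_toFinset.mpr hp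
  obtain ⟨x, t, rfl⟩ := List.exists_cons_of_ne_nil (l := l) (by
    rintro rfl
    have := pt_zero_zero_mem (R := R) hK
    simp [← hlP] at this)
  set c : ℝ × ℝ → ℝ := fun p => (1 - (R : ℝ)⁻¹) * |p.2|
  have hchain : (x :: t).IsChain fun u v => c u + c v ≤ ptDist u v :=
    (hl.imp_of_mem fun hu hv huv => charge_le_ptDist hR (hmem hu) (hmem hv) huv).isChain
  have hsum : ((x :: t).map c).sum = (1 - (R : ℝ)⁻¹) * ∑ p ∈ pointSet R K, |p.2| := by
    rw [← List.sum_toFinset c hl, hlP, mul_sum]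
  have hγ : 0 ≤ 1 - (R : ℝ)⁻¹ := sub_nonneg.mpr (inv_le_one_of_one_le₀ (by norm_cast; omega))
  have hend {p : ℝ × ℝ} (hp : p ∈ x :: t) : c p ≤ (1 - (R : ℝ)⁻¹) * R ^ (K - 1) :=
    mul_le_mul_of_nonneg_left (abs_snd_le_of_mem (by omega) (hmem hp)) hγ
  have := two_mul_sum_le_pathLength_add c x t hchain
  have := hend List.mem_cons_self
  have := hend (List.getLast_mem (List.cons_ne_nil x t))
  have := mul_le_mul_of_nonneg_left (le_sum_abs_snd (K := K) hR) hγ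
  nlinarith

lemma pt_snd_eq_one_iff (hR : 2 ≤ R) {m j : ℕ} : (pt R m j).2 = 1 ↔ m = 0 := by
  refine ⟨fun h => ?_, fun h => by simp [pt, h]⟩
  have h1 : (R : ℝ) ^ m = 1 := by rw [← abs_pt_snd R m j, h, abs_one]
  exact Nat.pow_eq_one.mp (by exact_mod_cast h1) |>.resolve_left (by omega)

lemma parentPt_pt_zero (R j : ℕ) : parentPt (pt R 0 j) = pt R 0 (j - 1) := by
  rcases j with _ | j
  · simp [parentPt, pt]
  · simp [parentPt, pt, mul_add]

lemma parentPt_pt_of_ne_zero (hR : 2 ≤ R) {m : ℕ} (hm : m ≠ 0) (j : ℕ) :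
    parentPt (pt R m j) = pt R 0 (j * R ^ m) := by
  rw [parentPt, if_neg ((pt_snd_eq_one_iff hR).not.mpr hm)]
  simp [pt, mul_assoc]

lemma iterate_parentPt_pt_zero (R j : ℕ) : parentPt^[j] (pt R 0 j) = pt R 0 0 := by
  induction j with
  | zero => rfl
  | succ j ih => rw [Function.iterate_succ_apply, parentPt_pt_zero, Nat.add_sub_cancel, ih]

lemma exists_iterate_parentPt_eq (hR : 2 ≤ R) {p : ℝ × ℝ} (hp : p ∈ pointSet R K) :
    ∃ n, parentPt^[n] p = pt R 0 0 := by
  obtain ⟨m, -, j, -, rfl⟩ := mem_pointSet.mp hp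
  rcases eq_or_ne m 0 with rfl | hm
  · exact ⟨j, iterate_parentPt_pt_zero R j⟩
  · refine ⟨j * R ^ m + 1, ?_⟩
    rw [Function.iterate_succ_apply, parentPt_pt_of_ne_zero hR hm, iterate_parentPt_pt_zero]

lemma parentPt_mem (hR : 2 ≤ R) {p : ℝ × ℝ} (hp : p ∈ pointSet R K) :
    parentPt p ∈ pointSet R K := by
  obtain ⟨m, hm, j, hj, rfl⟩ := mem_pointSet.mp hp
  refine mem_pointSet.mpr ⟨0, by omega, ?_⟩
  rcases eq_or_ne m 0 with rfl | hm0
  · exact ⟨j - 1, by omega, (parentPt_pt_zero R j).symm⟩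
  · refine ⟨j * R ^ m, ?_, (parentPt_pt_of_ne_zero hR hm0 j).symm⟩
    calc j * R ^ m ≤ R ^ (K - 1 - m) * R ^ m := Nat.mul_le_mul_right _ hj
      _ = R ^ (K - 1 - 0) := by rw [pow_sub_mul_pow R (by omega), Nat.sub_zero]

lemma ptDist_pt_parentPt_le (hR : 2 ≤ R) (m j : ℕ) :
    ptDist (pt R m j) (parentPt (pt R m j)) ≤ R ^ m + 1 := by
  rcases eq_or_ne m 0 with rfl | hm
  · rw [parentPt_pt_zero]
    rcases j with _ | j
    · simp [ptDist]
    · simp only [ptDist, pt, pow_zero, mul_one, sub_self, abs_zero]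
      push_cast
      rw [show 2 * ((j : ℝ) + 1) - 2 * j = 2 by ring]
      norm_num
  · have hx : (pt R m j).1 - (pt R 0 (j * R ^ m)).1 = 0 := by
      simp only [pt]; push_cast; ring
    rw [parentPt_pt_of_ne_zero hR hm, ptDist, hx, abs_zero]
    refine max_le (by positivity) ((abs_sub _ _).trans ?_)
    rw [abs_pt_snd]
    simp [pt]

lemma geom_sum_le_two_mul_pow (hR : 2 ≤ R) (hK : K ≠ 0) :
    ∑ m ∈ range K, R ^ m ≤ 2 * R ^ (K - 1) := by
  obtain ⟨n, rfl⟩ := Nat.exists_eq_succ_of_ne_zero hK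
  rw [sum_range_succ, Nat.succ_sub_one]
  have := Nat.geomSum_lt hR (s := range n) (n := n) (by simp)
  omega

lemma sum_range_pow_add_one_mul_le (hR : 2 ≤ R) (hK : K ≠ 0) :
    ∑ m ∈ range K, (R ^ (K - 1 - m) + 1) * (R ^ m + 1) ≤ (K + 6) * R ^ (K - 1) := by
  have hterm : ∀ m ∈ range K,
      (R ^ (K - 1 - m) + 1) * (R ^ m + 1) ≤ R ^ (K - 1) + R ^ (K - 1 - m) + 2 * R ^ m := by
    intro m hm
    have := pow_sub_mul_pow R (m := m) (n := K - 1) (by simp at hm; omega)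
    have := Nat.one_le_pow m R (by omega)
    nlinarith
  have hgeom := geom_sum_le_two_mul_pow hR hK
  calc _ ≤ ∑ m ∈ range K, (R ^ (K - 1) + R ^ (K - 1 - m) + 2 * R ^ m) := sum_le_sum hterm
    _ = K * R ^ (K - 1) + 3 * ∑ m ∈ range K, R ^ m := by
      rw [sum_add_distrib, sum_add_distrib, sum_range_reflect (R ^ ·), ← mul_sum, sum_const,
        card_range, smul_eq_mul]
      ring
    _ ≤ _ := by nlinarith

lemma sum_ptDist_parentPt_le (hR : 2 ≤ R) (hK : K ≠ 0) :
    ∑ p ∈ pointSet R K, ptDist p (parentPt p) ≤ (K + 6) * (R : ℝ) ^ (K - 1) := by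
  rw [sum_pointSet hR]
  calc _ ≤ ∑ m ∈ range K, ∑ _j ∈ range (R ^ (K - 1 - m) + 1), ((R : ℝ) ^ m + 1) := by
        gcongr with m _ j _
        exact ptDist_pt_parentPt_le hR m j
    _ = ((∑ m ∈ range K, (R ^ (K - 1 - m) + 1) * (R ^ m + 1) : ℕ) : ℝ) := by
        simp only [sum_const, card_range, nsmul_eq_mul]
        push_cast
        rfl
    _ ≤ _ := by exact_mod_cast sum_range_pow_add_one_mul_le hR hK

lemma exists_isTree_weightOf_pointSet_le (hR : 2 ≤ R) (hK : K ≠ 0) :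
    ∃ T : SimpleGraph (pointSet R K), T.IsTree ∧
      weightOf T (fun p q => ptDist p.1 q.1) ≤ (K + 6) * (R : ℝ) ^ (K - 1) := by
  let f : pointSet R K → pointSet R K := fun p => ⟨parentPt p, parentPt_mem hR p.2⟩
  have hf (n : ℕ) (p : pointSet R K) : (f^[n] p).1 = parentPt^[n] p :=
    (Function.Semiconj.iterate_right (f := Subtype.val) (fun _ => rfl) n) p
  have hroot (p : pointSet R K) : ∃ n, f^[n] p = ⟨pt R 0 0, pt_zero_zero_mem hK⟩ := by
    obtain ⟨n, hn⟩ := exists_iterate_parentPt_eq hR p.2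
    exact ⟨n, Subtype.ext ((hf n p).trans hn)⟩
  obtain ⟨T, hT, hTw⟩ := exists_isTree_weightOf_le f _ hroot (fun _ _ => ptDist_nonneg _ _)
    (fun _ _ => ptDist_comm _ _)
  refine ⟨T, hT, hTw.trans ?_⟩
  rw [sum_coe_sort (pointSet R K) fun p => ptDist p (parentPt p)]
  exact sum_ptDist_parentPt_le hR hK

end Construction

lemma two_sub_mul_add_six_le {ε n : ℝ} (hn : 2 ≤ n) (hεn : 16 ≤ ε * n) :
    (2 - ε) * (n + 6) ≤ (1 - n⁻¹) * (2 * n - 2) := by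
  rw [← mul_le_mul_iff_of_pos_left (by linarith : 0 < n)]
  have : n * ((1 - n⁻¹) * (2 * n - 2)) = 2 * (n - 1) ^ 2 := by field_simp
  rw [this]
  nlinarith

/-- For every `ε > 0` there is a finite set `P` of at least two points of `ℝ²` such that,
with the L∞ distance, every Hamiltonian path on `P` (an enumeration of `P` without
repetition) has length at least `(2 − ε)` times the weight of any minimum spanning tree
of `P`. -/
theorem stmt15 (ε : ℝ) (hε : 0 < ε) :
    ∃ P : Finset (ℝ × ℝ), 2 ≤ P.card ∧
      ∀ Tmin : SimpleGraph P, Tmin.IsTree →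
        (∀ T'' : SimpleGraph P, T''.IsTree →
          weightOf Tmin (fun p q => ptDist p.1 q.1) ≤
            weightOf T'' (fun p q => ptDist p.1 q.1)) →
        ∀ l : List (ℝ × ℝ), l.Nodup → l.toFinset = P →
          (2 - ε) * weightOf Tmin (fun p q => ptDist p.1 q.1) ≤ pathLength l := by
  obtain ⟨N, hN⟩ := exists_nat_ge (16 / ε)
  set n := N + 2
  refine ⟨pointSet n n, two_le_card_pointSet (by omega) (by omega), ?_⟩
  intro Tmin _ hmin l hl hlP
  obtain ⟨T, hT, hTw⟩ := exists_isTree_weightOf_pointSet_le (R := n) (K := n) (by omega) (by omega)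
  have hL := le_pathLength_of_toFinset_eq (R := n) (by omega) (by omega) hl hlP
  rcases le_or_gt ε 2 with hε2 | hε2
  · have hεn : 16 ≤ ε * n := by
      have := (div_le_iff₀ hε).mp hN
      push_cast [n]
      nlinarith
    calc (2 - ε) * weightOf Tmin _ ≤ (2 - ε) * ((n + 6) * (n : ℝ) ^ (n - 1)) := by
          gcongr; exact (hmin T hT).trans hTw
      _ ≤ (1 - (n : ℝ)⁻¹) * (2 * n - 2) * (n : ℝ) ^ (n - 1) := by
          rw [← mul_assoc]
          refine mul_le_mul_of_nonneg_right (two_sub_mul_add_six_le ?_ hεn) (by positivity)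
          push_cast [n]
          linarith [N.cast_nonneg (α := ℝ)]
      _ ≤ pathLength l := hL
  · exact (mul_nonpos_of_nonpos_of_nonneg (by linarith)
      (weightOf_nonneg _ fun _ _ => ptDist_nonneg _ _)).trans (pathLength_nonneg l)
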